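/- arXiv:1602.04968 — 3 statements merged into one kernel-verified Lean document; each statement's English description precedes it below -/
import Mathlib

section
/- Let n ≥ 2 and 1 ≤ k ≤ n − 1. Then the set P_k of rank-k Hermitian projections spans the real vector space B_H of all n×n complex Hermitian matrices: every X ∈ B_H is a real linear combination of rank-k Hermitian projections. -/
/-!
By the spectral theorem every Hermitian `X` equals `U diag(λ) U*` with `U` unitary and `λ` real,
and `d ↦ U diag(d) U*` is real-linear and sends the indicator vector of a `k`-subset to a rank-`k`
projection. So it suffices that these indicator vectors span `ℝⁿ` when `0 < k < n`: for `i ∉ T`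
with `|T| = k`, the indicators of the sets `T - j + i` (`j ∈ T`) sum to `k eᵢ + (k - 1) 1_T`.
-/

open Matrix

noncomputable section

/-- `BH n` is the real vector space of `n × n` complex Hermitian (self-adjoint) matrices. -/
abbrev BH (n : ℕ) := selfAdjoint (Matrix (Fin n) (Fin n) ℂ)

/-- `projSet n k` is the set of rank-`k` Hermitian projections, viewed inside `BH n`. -/
def projSet (n k : ℕ) : Set (BH n) :=
  {P | (P : Matrix (Fin n) (Fin n) ℂ) * (P : Matrix (Fin n) (Fin n) ℂ) = (P : Matrix (Fin n) (Fin n) ℂ)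
    ∧ (P : Matrix (Fin n) (Fin n) ℂ).rank = k}

section Indicator

variable {ι K : Type*} [DecidableEq ι]

theorem Finset.sum_pi_single_one_eq_indicator [AddCommMonoidWithOne K] (S : Finset ι) :
    ∑ j ∈ S, Pi.single j (1 : K) = (S : Set ι).indicator 1 := by
  ext x
  simp [Finset.sum_apply, Pi.single_apply, Set.indicator_apply]

theorem sum_indicator_insert_erase [Ring K] {T : Finset ι} {i : ι} (hi : i ∉ T) :
    ∑ j ∈ T, ((insert i (T.erase j) : Finset ι) : Set ι).indicator (1 : ι → K) =
      (T.card : K) • Pi.single i 1 + (T.card - 1 : K) • (T : Set ι).indicator 1 := by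
  simp only [← Finset.sum_pi_single_one_eq_indicator]
  have hterm : ∀ j ∈ T, ∑ m ∈ insert i (T.erase j), Pi.single m (1 : K) =
      Pi.single i 1 + ∑ m ∈ T, Pi.single m 1 - Pi.single j 1 := fun j hj => by
    rw [Finset.sum_insert (fun h => hi (Finset.mem_of_mem_erase h)),
      Finset.sum_erase_eq_sub hj, add_sub_assoc]
  rw [Finset.sum_congr rfl hterm, Finset.sum_sub_distrib, Finset.sum_add_distrib,
    Finset.sum_const, Finset.sum_const, sub_smul, one_smul]
  simp only [Nat.cast_smul_eq_nsmul]
  abel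

theorem span_indicator_card_eq_top [Fintype ι] [Field K] [CharZero K] {k : ℕ} (hk0 : 0 < k)
    (hk : k < Fintype.card ι) :
    Submodule.span K ((fun S : Finset ι => (S : Set ι).indicator (1 : ι → K)) '' {S | S.card = k})
      = ⊤ := by
  set V := Submodule.span K ((fun S : Finset ι => (S : Set ι).indicator (1 : ι → K)) ''
    {S | S.card = k})
  have hmem {S : Finset ι} (hS : S.card = k) : (S : Set ι).indicator 1 ∈ V :=
    Submodule.subset_span ⟨S, hS, rfl⟩
  rw [eq_top_iff, ← (Pi.basisFun K ι).span_eq, Submodule.span_le]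
  rintro _ ⟨i, rfl⟩
  obtain ⟨T, hTi, hT⟩ : ∃ T ⊆ Finset.univ.erase i, T.card = k :=
    Finset.exists_subset_card_eq (by simpa [Finset.card_erase_of_mem] using Nat.le_sub_one_of_lt hk)
  have hiT : i ∉ T := fun h => Finset.notMem_erase i _ (hTi h)
  have hsum := eq_sub_of_add_eq (sum_indicator_insert_erase (K := K) hiT).symm
  rw [hT] at hsum
  refine (V.smul_mem_iff (Nat.cast_ne_zero.2 hk0.ne' : (k : K) ≠ 0)).1 ?_
  rw [Pi.basisFun_apply, hsum]
  refine V.sub_mem (V.sum_mem fun j hj => hmem ?_) (V.smul_mem _ (hmem hT))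
  rw [Finset.card_insert_of_notMem (fun h => hiT (Finset.mem_of_mem_erase h)),
    Finset.card_erase_of_mem hj, hT, Nat.sub_add_cancel hk0]

end Indicator

section UnitaryConjDiagonal

open Unitary

variable {ι 𝕜 : Type*} [DecidableEq ι] [RCLike 𝕜]

theorem Matrix.rank_conjStarAlgAut [Fintype ι] {R S : Type*} [CommRing R] [StarRing R]
    [SMul S (Matrix ι ι R)] [IsScalarTower S (Matrix ι ι R) (Matrix ι ι R)]
    [SMulCommClass S (Matrix ι ι R) (Matrix ι ι R)] (U : unitary (Matrix ι ι R))
    (A : Matrix ι ι R) :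
    (conjStarAlgAut S _ U A).rank = A.rank := by
  rw [conjStarAlgAut_apply, ← coe_star,
    rank_mul_eq_left_of_isUnit_det _ _ (UnitaryGroup.det_isUnit _),
    rank_mul_eq_right_of_isUnit_det _ _ (UnitaryGroup.det_isUnit _)]

theorem Matrix.isSelfAdjoint_diagonal_ofReal (d : ι → ℝ) :
    IsSelfAdjoint (diagonal (fun i => (d i : 𝕜))) :=
  isHermitian_diagonal_iff.2 fun _ => RCLike.conj_ofReal _

variable [Fintype ι]

variable (𝕜) in
def unitaryConjDiagonal (U : unitary (Matrix ι ι 𝕜)) :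
    (ι → ℝ) →ₗ[ℝ] selfAdjoint (Matrix ι ι 𝕜) :=
  selfAdjointPart ℝ ∘ₗ (conjStarAlgAut ℝ _ U).toAlgEquiv.toLinearMap ∘ₗ
    diagonalLinearMap ι ℝ 𝕜 ∘ₗ LinearMap.compLeft (Algebra.linearMap ℝ 𝕜) ι

theorem coe_unitaryConjDiagonal (U : unitary (Matrix ι ι 𝕜)) (d : ι → ℝ) :
    (unitaryConjDiagonal 𝕜 U d : Matrix ι ι 𝕜) =
      conjStarAlgAut ℝ _ U (diagonal (fun i => (d i : 𝕜))) :=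
  ((isSelfAdjoint_diagonal_ofReal d).map (conjStarAlgAut ℝ _ U)).coe_selfAdjointPart_apply ℝ

theorem selfAdjoint.eq_unitaryConjDiagonal_eigenvalues (X : selfAdjoint (Matrix ι ι 𝕜)) :
    X = unitaryConjDiagonal 𝕜 (IsHermitian.eigenvectorUnitary X.2)
      (IsHermitian.eigenvalues X.2) := by
  ext1
  rw [coe_unitaryConjDiagonal]
  exact IsHermitian.spectral_theorem X.2

theorem isIdempotentElem_unitaryConjDiagonal_indicator (U : unitary (Matrix ι ι 𝕜))
    (S : Finset ι) :
    IsIdempotentElem (unitaryConjDiagonal 𝕜 U ((S : Set ι).indicator 1) : Matrix ι ι 𝕜) := by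
  rw [coe_unitaryConjDiagonal]
  refine IsIdempotentElem.map ?_ (conjStarAlgAut ℝ _ U)
  rw [IsIdempotentElem, diagonal_mul_diagonal]
  congr 1
  ext i
  by_cases hi : i ∈ S <;> simp [hi]

theorem rank_unitaryConjDiagonal_indicator (U : unitary (Matrix ι ι 𝕜)) (S : Finset ι) :
    (unitaryConjDiagonal 𝕜 U ((S : Set ι).indicator 1) : Matrix ι ι 𝕜).rank = S.card := by
  rw [coe_unitaryConjDiagonal, rank_conjStarAlgAut, rank_diagonal]
  simp [Set.indicator_apply]

theorem Matrix.span_selfAdjoint_isIdempotentElem_rank_eq_top {k : ℕ} (hk0 : 0 < k)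
    (hk : k < Fintype.card ι) :
    Submodule.span ℝ {P : selfAdjoint (Matrix ι ι 𝕜) |
      IsIdempotentElem (P : Matrix ι ι 𝕜) ∧ (P : Matrix ι ι 𝕜).rank = k} = ⊤ := by
  rw [eq_top_iff]
  rintro X -
  have hX := selfAdjoint.eq_unitaryConjDiagonal_eigenvalues X
  set f := unitaryConjDiagonal 𝕜 (IsHermitian.eigenvectorUnitary X.2)
  have hf : f '' ((fun S : Finset ι => (S : Set ι).indicator 1) '' {S | S.card = k}) ⊆
      {P | IsIdempotentElem (P : Matrix ι ι 𝕜) ∧ (P : Matrix ι ι 𝕜).rank = k} := by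
    rintro _ ⟨_, ⟨S, hS, rfl⟩, rfl⟩
    exact ⟨isIdempotentElem_unitaryConjDiagonal_indicator _ S,
      (rank_unitaryConjDiagonal_indicator _ S).trans hS⟩
  refine Submodule.span_mono hf ?_
  rw [Submodule.span_image, span_indicator_card_eq_top hk0 hk, Submodule.map_top, hX]
  exact LinearMap.mem_range_self _ _

end UnitaryConjDiagonal

theorem stmt_5_general (n k : ℕ) (hk1 : 1 ≤ k) (hkn : k ≤ n - 1) :
    Submodule.span ℝ (projSet n k) = (⊤ : Submodule ℝ (BH n)) :=
  span_selfAdjoint_isIdempotentElem_rank_eq_top hk1 (by simp; omega)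

theorem stmt_5 (n k : ℕ) (hn : 2 ≤ n) (hk1 : 1 ≤ k) (hkn : k ≤ n - 1) :
    Submodule.span ℝ (projSet n k) = (⊤ : Submodule ℝ (BH n)) :=
  stmt_5_general n k hk1 hkn
end
end

section
/- Let m ≥ 2 and let U be a 2m×2m complex unitary matrix that is antisymmetric, i.e., Uᵀ = −U. Then for every rank-1 Hermitian projection P in the 2m×2m complex matrices, the matrix I − P − U Pᵀ U* is a Hermitian projection of rank 2m − 2. Consequently the Breuer–Hall map Φ_BH(X) = (1/(2(m−1)))·((tr X)·I − X − U Xᵀ U*) maps every rank-1 Hermitian projection to 1/(2(m−1)) times a rank-(2m−2) Hermitian projection, and in particular Φ_BH is not injective as a linear map. -/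
/-!
For a rank-one projection `P`, the matrix `P U Pᵀ` is antisymmetric together with `U` and has rank
at most one, so it vanishes. Hence `P` and `U Pᵀ U*` are orthogonal projections, and
`1 - P - U Pᵀ U*` is a projection whose rank is its trace `2m - 2`. The Breuer–Hall map is not
injective because `U` lies in its kernel: `tr U = 0` and `U Uᵀ U* = -U`.
-/

open Matrix

namespace Matrix

variable {n : Type*}

theorem diag_eq_zero_of_transpose_eq_neg {R : Type*} [CommRing R] [IsDomain R] [NeZero (2 : R)]
    {A : Matrix n n R} (hA : Aᵀ = -A) (i : n) : A i i = 0 := by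
  have h := congr_fun₂ hA i i
  simp only [transpose_apply, neg_apply] at h
  have : (2 : R) * A i i = 0 := by linear_combination h
  exact (mul_eq_zero.mp this).resolve_left two_ne_zero

variable [Fintype n]

theorem trace_eq_zero_of_transpose_eq_neg {R : Type*} [CommRing R] [IsDomain R] [NeZero (2 : R)]
    {A : Matrix n n R} (hA : Aᵀ = -A) : A.trace = 0 :=
  Finset.sum_eq_zero fun i _ => diag_eq_zero_of_transpose_eq_neg hA i

theorem eq_zero_of_transpose_eq_neg_of_rank_le_one {R : Type*} [CommRing R] [IsDomain R]
    [NeZero (2 : R)] {A : Matrix n n R} (hA : Aᵀ = -A) (hr : A.rank ≤ 1) : A = 0 := by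
  by_contra hne
  obtain ⟨i, j, hij⟩ : ∃ i j, A i j ≠ 0 := by
    by_contra! h
    exact hne (ext h)
  have hji : A j i = -A i j := by simpa using congr_fun₂ hA i j
  -- the principal minor on rows and columns `i, j` is `A i j ^ 2`
  have hdet : (A.submatrix ![i, j] ![i, j]).det ≠ 0 := by
    rw [det_fin_two]
    simp [diag_eq_zero_of_transpose_eq_neg hA, hji, hij]
  have := (rank_of_det_ne_zero hdet).symm.trans_le ((rank_submatrix_le _ _ _).trans hr)
  simp at this

theorem mul_mul_transpose_eq_zero_of_rank_le_one {R : Type*} [CommRing R] [IsDomain R]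
    [NeZero (2 : R)] {U P : Matrix n n R} (hU : Uᵀ = -U) (hP : P.rank ≤ 1) :
    P * U * Pᵀ = 0 :=
  eq_zero_of_transpose_eq_neg_of_rank_le_one
    (by rw [transpose_mul, transpose_mul, transpose_transpose, hU]; noncomm_ring)
    ((rank_mul_le_left _ _).trans ((rank_mul_le_left _ _).trans hP))

theorem isStarProjection_transpose {α : Type*} [CommRing α] [StarRing α] {P : Matrix n n α}
    (hP : IsStarProjection P) : IsStarProjection Pᵀ where
  isIdempotentElem := by rw [IsIdempotentElem, ← transpose_mul, hP.isIdempotentElem.eq]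
  isSelfAdjoint := by
    rw [IsSelfAdjoint, star_eq_conjTranspose, conjTranspose_transpose_eq_transpose_conjTranspose,
      ← star_eq_conjTranspose, hP.isSelfAdjoint.star_eq]

variable [DecidableEq n]

theorem trace_eq_rank_of_isIdempotentElem {K : Type*} [Field K] {A : Matrix n n K}
    (hA : IsIdempotentElem A) : A.trace = A.rank := by
  have hf : IsIdempotentElem (toLin' A) := hA.map toLinAlgEquiv'
  rw [← trace_toLin'_eq, (LinearMap.IsIdempotentElem.isProj_range _ hf).trace, rank,
    toLin'_apply']

theorem isStarProjection_mul_transpose_mul_conjTranspose {α : Type*} [CommRing α] [StarRing α]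
    {U P : Matrix n n α} (hU : U ∈ unitaryGroup n α) (hP : IsStarProjection P) :
    IsStarProjection (U * Pᵀ * Uᴴ) :=
  (isStarProjection_transpose hP).map (Unitary.conjStarAlgAut α (Matrix n n α) ⟨U, hU⟩)

theorem trace_mul_transpose_mul_conjTranspose {α : Type*} [CommRing α] [StarRing α]
    {U : Matrix n n α} (hU : U ∈ unitaryGroup n α) (P : Matrix n n α) :
    (U * Pᵀ * Uᴴ).trace = P.trace := by
  rw [trace_mul_cycle, ← star_eq_conjTranspose, Unitary.star_mul_self_of_mem hU, one_mul,
    trace_transpose]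

theorem mul_transpose_mul_conjTranspose_self {α : Type*} [CommRing α] [StarRing α]
    {U : Matrix n n α} (hU : U ∈ unitaryGroup n α) (hUanti : Uᵀ = -U) : U * Uᵀ * Uᴴ = -U := by
  rw [hUanti, mul_neg, neg_mul, mul_assoc, ← star_eq_conjTranspose,
    Unitary.mul_star_self_of_mem hU, mul_one]

section Orthogonal

variable {K : Type*} [Field K] [StarRing K] [CharZero K] {U P : Matrix n n K}
  (hU : U ∈ unitaryGroup n K) (hUanti : Uᵀ = -U) (hP : IsStarProjection P)
include hU hUanti hP

theorem isStarProjection_one_sub_sub_mul_transpose_mul_conjTranspose (hr : P.rank ≤ 1) :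
    IsStarProjection (1 - P - U * Pᵀ * Uᴴ) := by
  have horth : P * (U * Pᵀ * Uᴴ) = 0 := by
    rw [← mul_assoc, ← mul_assoc, mul_mul_transpose_eq_zero_of_rank_le_one hUanti hr, zero_mul]
  rw [sub_sub]
  exact (hP.add (isStarProjection_mul_transpose_mul_conjTranspose hU hP) horth).one_sub

theorem rank_one_sub_sub_mul_transpose_mul_conjTranspose_add_two (hr : P.rank = 1) :
    (1 - P - U * Pᵀ * Uᴴ).rank + 2 = Fintype.card n := by
  have hR := isStarProjection_one_sub_sub_mul_transpose_mul_conjTranspose hU hUanti hP hr.le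
  have htr := trace_eq_rank_of_isIdempotentElem hR.isIdempotentElem
  rw [trace_sub, trace_sub, trace_mul_transpose_mul_conjTranspose hU,
    trace_eq_rank_of_isIdempotentElem hP.isIdempotentElem, hr, trace_one] at htr
  have : (((1 - P - U * Pᵀ * Uᴴ).rank + 2 : ℕ) : K) = Fintype.card n := by
    push_cast at htr ⊢
    linear_combination -htr
  exact_mod_cast this

end Orthogonal

end Matrix

theorem stmt_9 (m : ℕ) (hm : 2 ≤ m)
    (U : Matrix (Fin (2 * m)) (Fin (2 * m)) ℂ)
    (hU : U ∈ Matrix.unitaryGroup (Fin (2 * m)) ℂ)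
    (hUanti : Uᵀ = -U) :
    (∀ P : Matrix (Fin (2 * m)) (Fin (2 * m)) ℂ,
      P.IsHermitian → P * P = P → P.rank = 1 →
        (1 - P - U * Pᵀ * Uᴴ).IsHermitian ∧
        (1 - P - U * Pᵀ * Uᴴ) * (1 - P - U * Pᵀ * Uᴴ) = 1 - P - U * Pᵀ * Uᴴ ∧
        (1 - P - U * Pᵀ * Uᴴ).rank = 2 * m - 2) ∧
    (∀ P : Matrix (Fin (2 * m)) (Fin (2 * m)) ℂ,
      P.IsHermitian → P * P = P → P.rank = 1 →
        ∃ Q : Matrix (Fin (2 * m)) (Fin (2 * m)) ℂ,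
          Q.IsHermitian ∧ Q * Q = Q ∧ Q.rank = 2 * m - 2 ∧
          (1 / (2 * ((m : ℂ) - 1))) • (P.trace • (1 : Matrix (Fin (2 * m)) (Fin (2 * m)) ℂ)
              - P - U * Pᵀ * Uᴴ)
            = (1 / (2 * ((m : ℂ) - 1))) • Q) ∧
    ¬ Function.Injective (fun X : Matrix (Fin (2 * m)) (Fin (2 * m)) ℂ =>
        (1 / (2 * ((m : ℂ) - 1))) • (X.trace • (1 : Matrix (Fin (2 * m)) (Fin (2 * m)) ℂ)
          - X - U * Xᵀ * Uᴴ)) := by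
  have hproj (P : Matrix (Fin (2 * m)) (Fin (2 * m)) ℂ) (hPH : P.IsHermitian) (hP2 : P * P = P)
      (hr : P.rank = 1) :
      IsStarProjection (1 - P - U * Pᵀ * Uᴴ) ∧ (1 - P - U * Pᵀ * Uᴴ).rank = 2 * m - 2 := by
    have hrank := rank_one_sub_sub_mul_transpose_mul_conjTranspose_add_two hU hUanti ⟨hP2, hPH⟩ hr
    rw [Fintype.card_fin] at hrank
    exact ⟨isStarProjection_one_sub_sub_mul_transpose_mul_conjTranspose hU hUanti ⟨hP2, hPH⟩ hr.le,
      by omega⟩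
  refine ⟨fun P hPH hP2 hr => ?_, fun P hPH hP2 hr => ?_, ?_⟩
  · obtain ⟨hR, hrank⟩ := hproj P hPH hP2 hr
    exact ⟨hR.isSelfAdjoint, hR.isIdempotentElem, hrank⟩
  · obtain ⟨hR, hrank⟩ := hproj P hPH hP2 hr
    have htr : P.trace = 1 := by rw [trace_eq_rank_of_isIdempotentElem hP2, hr, Nat.cast_one]
    exact ⟨_, hR.isSelfAdjoint, hR.isIdempotentElem, hrank, by rw [htr, one_smul]⟩
  · have : Nonempty (Fin (2 * m)) := ⟨⟨0, by omega⟩⟩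
    have hUne : U ≠ 0 := by
      rintro rfl
      simpa using Unitary.mul_star_self_of_mem hU
    intro hinj
    refine hUne (hinj ?_)
    simp [trace_eq_zero_of_transpose_eq_neg hUanti, mul_transpose_mul_conjTranspose_self hU hUanti]
end

section
/- Let n ≥ 1, let 1 ≤ l ≤ n, and let D be an n×n complex Hermitian matrix with tr D = 0 such that D + Q is a Hermitian projection for every rank-l Hermitian projection Q. Then D = 0. -/
open Matrix

noncomputable section

theorem stmt_12 (n l : ℕ) (hn : 1 ≤ n) (hl1 : 1 ≤ l) (hln : l ≤ n)
    (D : Matrix (Fin n) (Fin n) ℂ) (hD : D.IsHermitian) (htr : D.trace = 0)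
    (h : ∀ Q : Matrix (Fin n) (Fin n) ℂ, Q.IsHermitian → Q * Q = Q → Q.rank = l →
      (D + Q).IsHermitian ∧ (D + Q) * (D + Q) = D + Q) :
    D = 0 := by
  classical
  set U : Matrix (Fin n) (Fin n) ℂ := (hD.eigenvectorUnitary : Matrix (Fin n) (Fin n) ℂ) with hUdef
  have hU : U ∈ Matrix.unitaryGroup (Fin n) ℂ := hD.eigenvectorUnitary.2
  have hUsU : star U * U = 1 := Matrix.mem_unitaryGroup_iff'.mp hU
  have hUdet : IsUnit U.det := Matrix.isUnit_det_of_left_inverse hUsU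
  have hUsdet : IsUnit (star U).det := Matrix.isUnit_det_of_right_inverse hUsU
  set f : Fin n → ℂ := fun i => (hD.eigenvalues i : ℂ) with hfdef
  have hspec : D = U * Matrix.diagonal f * star U := hD.spectral_theorem
  -- helper: product of conjugated diagonals
  have hmul : ∀ v w : Fin n → ℂ, (U * Matrix.diagonal v * star U) * (U * Matrix.diagonal w * star U)
      = U * Matrix.diagonal (fun i => v i * w i) * star U := by
    intro v w
    have h1 : star U * (U * (Matrix.diagonal w * star U)) = Matrix.diagonal w * star U := by
      rw [← mul_assoc, hUsU, one_mul]
    calc (U * Matrix.diagonal v * star U) * (U * Matrix.diagonal w * star U)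
        = U * Matrix.diagonal v * (star U * (U * (Matrix.diagonal w * star U))) := by
          simp only [mul_assoc]
      _ = U * Matrix.diagonal v * (Matrix.diagonal w * star U) := by rw [h1]
      _ = U * (Matrix.diagonal v * Matrix.diagonal w) * star U := by simp only [mul_assoc]
      _ = U * Matrix.diagonal (fun i => v i * w i) * star U := by
          rw [Matrix.diagonal_mul_diagonal]
  -- helper: cancel conjugation
  have hcancel : ∀ X Y : Matrix (Fin n) (Fin n) ℂ,
      U * X * star U = U * Y * star U → X = Y := by
    intro X Y hXY
    calc X = (star U * U) * X * (star U * U) := by rw [hUsU, one_mul, mul_one]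
      _ = star U * (U * X * star U) * U := by simp only [mul_assoc]
      _ = star U * (U * Y * star U) * U := by rw [hXY]
      _ = (star U * U) * Y * (star U * U) := by simp only [mul_assoc]
      _ = Y := by rw [hUsU, one_mul, mul_one]
  -- key step: for every S of card l, eigenvalue equations
  have key : ∀ S : Finset (Fin n), S.card = l → ∀ i : Fin n,
      (f i + (if i ∈ S then 1 else 0)) * (f i + (if i ∈ S then 1 else 0))
        = f i + (if i ∈ S then 1 else 0) := by
    intro S hS i
    set d : Fin n → ℂ := fun i => if i ∈ S then (1 : ℂ) else 0 with hddef
    set Q : Matrix (Fin n) (Fin n) ℂ := U * Matrix.diagonal d * star U with hQdef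
    have hQH : Q.IsHermitian := by
      rw [hQdef, Matrix.star_eq_conjTranspose]
      refine Matrix.isHermitian_mul_mul_conjTranspose U ?_
      rw [Matrix.IsHermitian, Matrix.diagonal_conjTranspose]
      have hds : star d = d := by
        funext j
        by_cases hj : j ∈ S <;> simp [hddef, hj]
      exact congrArg Matrix.diagonal hds
    have hQQ : Q * Q = Q := by
      rw [hQdef, hmul]
      have hdd : (fun i => d i * d i) = d := by
        funext j
        by_cases hj : j ∈ S <;> simp [hddef, hj]
      exact congrArg (fun v => U * Matrix.diagonal v * star U) hdd
    have hQrank : Q.rank = l := by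
      rw [hQdef, Matrix.rank_mul_eq_left_of_isUnit_det _ _ hUsdet,
        Matrix.rank_mul_eq_right_of_isUnit_det _ _ hUdet,
        Matrix.rank_diagonal, ← hS, ← Fintype.card_coe S]
      refine Fintype.card_congr (Equiv.subtypeEquivRight ?_)
      intro j
      by_cases hj : j ∈ S <;> simp [hddef, hj]
    obtain ⟨-, hsq⟩ := h Q hQH hQQ hQrank
    have hDQ : D + Q = U * Matrix.diagonal (fun i => f i + d i) * star U := by
      have hda : Matrix.diagonal (fun i => f i + d i) = Matrix.diagonal f + Matrix.diagonal d := by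
        rw [← Matrix.diagonal_add]
      rw [hspec, hQdef, hda, Matrix.mul_add, Matrix.add_mul]
    rw [hDQ, hmul] at hsq
    have := congrFun (Matrix.diagonal_injective (hcancel _ _ hsq)) i
    simpa [hddef] using this
  -- each eigenvalue is zero
  have hzero : ∀ i, hD.eigenvalues i = 0 := by
    rcases lt_or_eq_of_le hln with hlt | heq
    · intro i
      obtain ⟨S₁, hS₁sub, -, hS₁card⟩ := Finset.exists_subsuperset_card_eq
        (Finset.subset_univ ({i} : Finset (Fin n))) (by simpa using hl1)
        (by simpa using hln)
      obtain ⟨S₂, hS₂sub, hS₂card⟩ := Finset.exists_subset_card_eq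
        (s := Finset.univ \ {i}) (n := l)
        (by
          rw [Finset.card_sdiff_of_subset (Finset.subset_univ _)]
          simp only [Finset.card_singleton, Finset.card_univ, Fintype.card_fin]
          omega)
      have h1 := key S₁ hS₁card i
      have h2 := key S₂ hS₂card i
      have hi1 : i ∈ S₁ := hS₁sub (Finset.mem_singleton_self i)
      have hi2 : i ∉ S₂ := fun hmem => by simpa using hS₂sub hmem
      rw [if_pos hi1] at h1
      rw [if_neg hi2] at h2
      have e1 : f i * (f i + 1) = 0 := by linear_combination h1
      have e2 : f i * (f i - 1) = 0 := by linear_combination (by simpa using h2 : f i * f i = f i)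
      have : f i = 0 := by
        rcases mul_eq_zero.mp e1 with hc | hc
        · exact hc
        rcases mul_eq_zero.mp e2 with hc' | hc'
        · exact hc'
        · exfalso
          have : (2 : ℂ) = 0 := by linear_combination hc - hc'
          norm_num at this
      have h0 : ((hD.eigenvalues i : ℝ) : ℂ) = 0 := by simpa [hfdef] using this
      exact_mod_cast h0
    · intro i
      have hcard : (Finset.univ : Finset (Fin n)).card = l := by
        simp [← heq]
      have hmem : ∀ j, hD.eigenvalues j = 0 ∨ hD.eigenvalues j = -1 := by
        intro j
        have h1 := key Finset.univ hcard j
        rw [if_pos (Finset.mem_univ j)] at h1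
        have hc : f j * (f j + 1) = 0 := by linear_combination h1
        rcases mul_eq_zero.mp hc with hc | hc
        · left
          have hc' : ((hD.eigenvalues j : ℝ) : ℂ) = 0 := hc
          exact_mod_cast hc'
        · right
          have h1 : ((hD.eigenvalues j : ℝ) : ℂ) = -1 := by linear_combination hc
          exact_mod_cast h1
      have htr2 : ∑ j, hD.eigenvalues j = 0 := by
        have ht := congrArg Matrix.trace hspec
        rw [Matrix.trace_mul_cycle, hUsU, one_mul, Matrix.trace_diagonal, htr, hfdef] at ht
        have : ((∑ j, hD.eigenvalues j : ℝ) : ℂ) = 0 := by push_cast; exact ht.symm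
        exact_mod_cast this
      have hnonpos : ∀ j ∈ Finset.univ, hD.eigenvalues j ≤ 0 := by
        intro j _
        rcases hmem j with hj | hj <;> simp [hj]
      exact (Finset.sum_eq_zero_iff_of_nonpos hnonpos).mp htr2 i (Finset.mem_univ i)
  have hf0 : f = 0 := by
    funext i
    simp [hfdef, hzero i]
  have hd0 : Matrix.diagonal (0 : Fin n → ℂ) = 0 := Matrix.diagonal_zero
  rw [hspec, hf0, hd0, Matrix.mul_zero, Matrix.zero_mul]
end
end
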